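/- Fix real numbers J and Q with the constraint that the expression under the square root is nonnegative. The function f(m) = 4π(2m^2 − Q^2 + 2m·sqrt(m^2 − J^2/m^2 − Q^2)), defined for m > 0 with m^2 − J^2/m^2 − Q^2 ≥ 0, is monotonically increasing in m. -/
import Mathlib


open Real

theorem kerrNewman_area_monotone (J Q : ℝ) :
    ∀ m₁ m₂ : ℝ, 0 < m₁ → 0 < m₂ → m₁ ≤ m₂ →
      m₁ ^ 2 - J ^ 2 / m₁ ^ 2 - Q ^ 2 ≥ 0 →
      m₂ ^ 2 - J ^ 2 / m₂ ^ 2 - Q ^ 2 ≥ 0 →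
      4 * π * (2 * m₁ ^ 2 - Q ^ 2 +
          2 * m₁ * Real.sqrt (m₁ ^ 2 - J ^ 2 / m₁ ^ 2 - Q ^ 2)) ≤
        4 * π * (2 * m₂ ^ 2 - Q ^ 2 +
          2 * m₂ * Real.sqrt (m₂ ^ 2 - J ^ 2 / m₂ ^ 2 - Q ^ 2)) := by
  intro m₁ m₂ h₁ h₂ h12 hA₁ hA₂
  have hsq : m₁ ^ 2 ≤ m₂ ^ 2 := pow_le_pow_left₀ h₁.le h12 2
  have hdiv : J ^ 2 / m₂ ^ 2 ≤ J ^ 2 / m₁ ^ 2 :=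
    div_le_div_of_nonneg_left (sq_nonneg J) (pow_pos h₁ 2) hsq
  have hAle : m₁ ^ 2 - J ^ 2 / m₁ ^ 2 - Q ^ 2 ≤ m₂ ^ 2 - J ^ 2 / m₂ ^ 2 - Q ^ 2 := by
    linarith
  have hs : Real.sqrt (m₁ ^ 2 - J ^ 2 / m₁ ^ 2 - Q ^ 2) ≤
      Real.sqrt (m₂ ^ 2 - J ^ 2 / m₂ ^ 2 - Q ^ 2) := Real.sqrt_le_sqrt hAle
  have hm : 2 * m₁ * Real.sqrt (m₁ ^ 2 - J ^ 2 / m₁ ^ 2 - Q ^ 2) ≤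
      2 * m₂ * Real.sqrt (m₂ ^ 2 - J ^ 2 / m₂ ^ 2 - Q ^ 2) :=
    mul_le_mul (by linarith) hs (Real.sqrt_nonneg _) (by linarith)
  have hπ : (0:ℝ) ≤ 4 * π := by positivity
  apply mul_le_mul_of_nonneg_left _ hπ
  linarith
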